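/- arXiv:1907.06624 — 4 statements merged into one kernel-verified Lean document; each statement's English description precedes it below -/
import Mathlib

section
/- For all smooth H, F : ℝⁿ × ℝⁿ → ℝ and every smooth Ψ : ℝⁿ × ℝⁿ → ℂ, the covariant Liouvillian operators satisfy the commutator identity L̂_H(L̂_F Ψ) − L̂_F(L̂_H Ψ) = iħ L̂_{{H,F}} Ψ. -/
open Complex

noncomputable section

/-- Classical phase space `T*Q = ℝⁿ × ℝⁿ` with coordinates `z = (q, p)`. -/
abbrev PS (n : ℕ) := (Fin n → ℝ) × (Fin n → ℝ)

variable {n : ℕ}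

/-- Partial derivative `∂f/∂qⁱ` of a complex-valued function on phase space. -/
noncomputable def dq (i : Fin n) (f : PS n → ℂ) (z : PS n) : ℂ :=
  fderiv ℝ f z (Pi.single i 1, 0)

/-- Partial derivative `∂f/∂pᵢ` of a complex-valued function on phase space. -/
noncomputable def dp (i : Fin n) (f : PS n → ℂ) (z : PS n) : ℂ :=
  fderiv ℝ f z (0, Pi.single i 1)

/-- Partial derivative `∂f/∂qⁱ` of a real-valued function on phase space. -/
noncomputable def dqR (i : Fin n) (f : PS n → ℝ) (z : PS n) : ℝ :=
  fderiv ℝ f z (Pi.single i 1, 0)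

/-- Partial derivative `∂f/∂pᵢ` of a real-valued function on phase space. -/
noncomputable def dpR (i : Fin n) (f : PS n → ℝ) (z : PS n) : ℝ :=
  fderiv ℝ f z (0, Pi.single i 1)

/-- Canonical Poisson bracket `{F,G} = Σᵢ (∂F/∂qⁱ ∂G/∂pᵢ − ∂F/∂pᵢ ∂G/∂qⁱ)`,
extended ℂ-bilinearly to complex-valued functions. -/
noncomputable def pb (F G : PS n → ℂ) (z : PS n) : ℂ :=
  ∑ i, (dq i F z * dp i G z - dp i F z * dq i G z)

/-- Canonical Poisson bracket of real-valued functions. -/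
noncomputable def pbR (F G : PS n → ℝ) (z : PS n) : ℝ :=
  ∑ i, (dqR i F z * dpR i G z - dpR i F z * dqR i G z)

/-- The covariant Liouvillian (prequantum operator)
`L̂_H Ψ := iℏ {H, Ψ} − (Σᵢ pᵢ ∂H/∂pᵢ − H) Ψ`. -/
noncomputable def Liouv (ℏ : ℝ) (H : PS n → ℝ) (Ψ : PS n → ℂ) (z : PS n) : ℂ :=
  Complex.I * ℏ * pb (fun w => (H w : ℂ)) Ψ z
    - (((∑ i, z.2 i * dpR i H z) - H z : ℝ) : ℂ) * Ψ z

/-!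
Write `L̂_H Ψ = iℏ {h, Ψ} − (L h) Ψ`, where `h` is `H` viewed as a complex function and
`L h = Σ pⱼ ∂h/∂pⱼ − h`. Expanding the commutator with the Leibniz rule, the terms quadratic in
`L` cancel, and what remains is the Jacobi identity for `{·,·}` together with the fact that `L`
is a derivation of the Poisson bracket: `L {h, f} = {h, L f} + {L h, f}`. The latter holds because
the bracket is homogeneous of degree one under the dilations `p ↦ λ p` of the momenta, whose
generator is `Σ pⱼ ∂/∂pⱼ`.
-/

open scoped ContDiff

theorem Finset.sum_sum_eq_zero_of_antisymm {ι M : Type*} [AddCommGroup M] [IsAddTorsionFree M]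
    (s : Finset ι) {E : ι → ι → M} (h : ∀ i j, E i j = -E j i) : ∑ i ∈ s, ∑ j ∈ s, E i j = 0 := by
  have hneg : ∑ i ∈ s, ∑ j ∈ s, E i j = -∑ i ∈ s, ∑ j ∈ s, E i j := by
    conv_lhs => rw [Finset.sum_comm]; enter [2, i, 2, j]; rw [h]
    simp only [Finset.sum_neg_distrib]
  rw [← two_nsmul_eq_zero, two_nsmul]
  nth_rw 2 [hneg]
  exact add_neg_cancel _

section SecondDerivative

variable {E F : Type*} [NormedAddCommGroup E] [NormedSpace ℝ E] [NormedAddCommGroup F]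
  [NormedSpace ℝ F]

theorem ContDiff.fderiv_apply_const {f : E → F} (hf : ContDiff ℝ ∞ f) (v : E) :
    ContDiff ℝ ∞ (fun z => fderiv ℝ f z v) :=
  (hf.fderiv_right le_rfl).clm_apply contDiff_const

theorem fderiv_fderiv_apply_comm {f : E → F} {z : E} (hf : ContDiffAt ℝ 2 f z) (v w : E) :
    fderiv ℝ (fun y => fderiv ℝ f y w) z v = fderiv ℝ (fun y => fderiv ℝ f y v) z w := by
  have hd : DifferentiableAt ℝ (fderiv ℝ f) z :=
    (hf.fderiv_right (m := 1) le_rfl).differentiableAt one_ne_zero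
  rw [fderiv_clm_apply hd (differentiableAt_const w),
    fderiv_clm_apply hd (differentiableAt_const v)]
  simpa using (hf.isSymmSndFDerivAt (by simp [minSmoothness_of_isRCLikeNormedField])).eq v w

end SecondDerivative

theorem fderiv_ofReal_comp_apply {E : Type*} [NormedAddCommGroup E] [NormedSpace ℝ E] {f : E → ℝ}
    {z : E} (hf : DifferentiableAt ℝ f z) (v : E) :
    fderiv ℝ (fun w => (f w : ℂ)) z v = (fderiv ℝ f z v : ℂ) := by
  have h : HasFDerivAt (fun w => (f w : ℂ)) (ofRealCLM.comp (fderiv ℝ f z)) z :=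
    ofRealCLM.hasFDerivAt.comp z hf.hasFDerivAt
  rw [h.fderiv]
  rfl

def vq (i : Fin n) : PS n := (Pi.single i 1, 0)

def vp (i : Fin n) : PS n := (0, Pi.single i 1)

theorem dq_eq_fderiv (i : Fin n) (f : PS n → ℂ) (z : PS n) : dq i f z = fderiv ℝ f z (vq i) := rfl

theorem dp_eq_fderiv (i : Fin n) (f : PS n → ℂ) (z : PS n) : dp i f z = fderiv ℝ f z (vp i) := rfl

section Smooth

variable {f g : PS n → ℂ}

theorem contDiff_dq (hf : ContDiff ℝ ∞ f) (i : Fin n) : ContDiff ℝ ∞ (dq i f) :=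
  hf.fderiv_apply_const (vq i)

theorem contDiff_dp (hf : ContDiff ℝ ∞ f) (i : Fin n) : ContDiff ℝ ∞ (dp i f) :=
  hf.fderiv_apply_const (vp i)

theorem contDiff_pb (hf : ContDiff ℝ ∞ f) (hg : ContDiff ℝ ∞ g) : ContDiff ℝ ∞ (pb f g) :=
  ContDiff.sum fun i _ =>
    ((contDiff_dq hf i).mul (contDiff_dp hg i)).sub ((contDiff_dp hf i).mul (contDiff_dq hg i))

theorem dq_dq_comm (hf : ContDiff ℝ 2 f) (i j : Fin n) (z : PS n) :
    dq i (dq j f) z = dq j (dq i f) z :=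
  fderiv_fderiv_apply_comm hf.contDiffAt _ _

theorem dp_dp_comm (hf : ContDiff ℝ 2 f) (i j : Fin n) (z : PS n) :
    dp i (dp j f) z = dp j (dp i f) z :=
  fderiv_fderiv_apply_comm hf.contDiffAt _ _

theorem dp_dq_comm (hf : ContDiff ℝ 2 f) (i j : Fin n) (z : PS n) :
    dp i (dq j f) z = dq j (dp i f) z :=
  fderiv_fderiv_apply_comm hf.contDiffAt _ _

end Smooth

section Leibniz

variable {h a b : PS n → ℂ} {z : PS n}

theorem pb_sub_right (ha : DifferentiableAt ℝ a z) (hb : DifferentiableAt ℝ b z) :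
    pb h (fun w => a w - b w) z = pb h a z - pb h b z := by
  simp only [pb, dq, dp, fderiv_fun_sub ha hb, ← Finset.sum_sub_distrib]
  exact Finset.sum_congr rfl fun i _ => by simp only [sub_apply]; ring

theorem pb_const_mul_right (ha : DifferentiableAt ℝ a z) (c : ℂ) :
    pb h (fun w => c * a w) z = c * pb h a z := by
  simp only [pb, dq, dp, fderiv_const_mul ha c, Finset.mul_sum]
  exact Finset.sum_congr rfl fun i _ => by simp only [smul_apply, smul_eq_mul]; ring

theorem pb_mul_right (ha : DifferentiableAt ℝ a z) (hb : DifferentiableAt ℝ b z) :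
    pb h (fun w => a w * b w) z = pb h a z * b z + a z * pb h b z := by
  simp only [pb, dq, dp, fderiv_fun_mul ha hb, Finset.sum_mul, Finset.mul_sum,
    ← Finset.sum_add_distrib]
  exact Finset.sum_congr rfl fun i _ => by
    simp only [add_apply, smul_apply, smul_eq_mul]; ring

end Leibniz

theorem pb_skew (f g : PS n → ℂ) (z : PS n) : -pb g f z = pb f g z := by
  simp only [pb, ← Finset.sum_neg_distrib]
  exact Finset.sum_congr rfl fun i _ => by ring

section Jacobi

variable {f g h : PS n → ℂ}

theorem fderiv_pb_apply (hf : ContDiff ℝ ∞ f) (hg : ContDiff ℝ ∞ g) (z v : PS n) :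
    fderiv ℝ (pb f g) z v = ∑ j, (fderiv ℝ (dq j f) z v * dp j g z
      + dq j f z * fderiv ℝ (dp j g) z v - fderiv ℝ (dp j f) z v * dq j g z
      - dp j f z * fderiv ℝ (dq j g) z v) := by
  have hd : ∀ {u : PS n → ℂ}, ContDiff ℝ ∞ u → DifferentiableAt ℝ u z :=
    fun hu => hu.differentiable (by simp) z
  have hfq := fun j => hd (contDiff_dq hf j)
  have hfp := fun j => hd (contDiff_dp hf j)
  have hgq := fun j => hd (contDiff_dq hg j)
  have hgp := fun j => hd (contDiff_dp hg j)
  unfold pb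
  rw [fderiv_fun_sum (u := Finset.univ)
    (A := fun j w => dq j f w * dp j g w - dp j f w * dq j g w) (fun j _ => by fun_prop), sum_apply]
  refine Finset.sum_congr rfl fun j _ => ?_
  rw [fderiv_fun_sub (by fun_prop) (by fun_prop), fderiv_fun_mul (hfq j) (hgp j),
    fderiv_fun_mul (hfp j) (hgq j)]
  simp only [sub_apply, add_apply, smul_apply, smul_eq_mul]
  ring

theorem dq_pb (hf : ContDiff ℝ ∞ f) (hg : ContDiff ℝ ∞ g) (i : Fin n) (z : PS n) :
    dq i (pb f g) z = ∑ j, (dq i (dq j f) z * dp j g z + dq j f z * dq i (dp j g) z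
      - dq i (dp j f) z * dq j g z - dp j f z * dq i (dq j g) z) :=
  fderiv_pb_apply hf hg z (vq i)

theorem dp_pb (hf : ContDiff ℝ ∞ f) (hg : ContDiff ℝ ∞ g) (i : Fin n) (z : PS n) :
    dp i (pb f g) z = ∑ j, (dp i (dq j f) z * dp j g z + dq j f z * dp i (dp j g) z
      - dp i (dp j f) z * dq j g z - dp j f z * dp i (dq j g) z) :=
  fderiv_pb_apply hf hg z (vp i)

theorem pb_jacobi (hh : ContDiff ℝ ∞ h) (hf : ContDiff ℝ ∞ f) (hg : ContDiff ℝ ∞ g) (z : PS n) :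
    pb (pb h f) g z = pb h (pb f g) z - pb f (pb h g) z := by
  have hh2 : ContDiff ℝ 2 h := hh.of_le ENat.LEInfty.out
  have hf2 : ContDiff ℝ 2 f := hf.of_le ENat.LEInfty.out
  have hg2 : ContDiff ℝ 2 g := hg.of_le ENat.LEInfty.out
  rw [← sub_eq_zero]
  simp only [pb, dq_pb, dp_pb, hh, hf, hg, Finset.mul_sum, Finset.sum_mul,
    ← Finset.sum_sub_distrib]
  -- Once mixed partials are in a normal form, the double sum is antisymmetric in `(i, j)`; the
  -- commutation lemmas are permutative, so `simp` uses them as ordered rewrite rules.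
  refine Finset.sum_sum_eq_zero_of_antisymm _ fun i j => ?_
  simp only [dq_dq_comm hh2, dq_dq_comm hf2, dq_dq_comm hg2, dp_dp_comm hh2, dp_dp_comm hf2,
    dp_dp_comm hg2, dp_dq_comm hh2, dp_dq_comm hf2, dp_dq_comm hg2]
  ring

end Jacobi

def momentum (j : Fin n) : PS n →L[ℝ] ℂ :=
  ofRealCLM.comp ((ContinuousLinearMap.proj j).comp (ContinuousLinearMap.snd ℝ _ _))

@[simp]
theorem momentum_apply (j : Fin n) (z : PS n) : momentum j z = z.2 j := rfl

/-- The Legendre transform of `f` in the momenta. -/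
def lagrangian (f : PS n → ℂ) (z : PS n) : ℂ := ∑ j, momentum j z * dp j f z - f z

section Lagrangian

variable {f h : PS n → ℂ}

theorem contDiff_lagrangian (hf : ContDiff ℝ ∞ f) : ContDiff ℝ ∞ (lagrangian f) :=
  (ContDiff.sum fun j _ => (momentum j).contDiff.mul (contDiff_dp hf j)).sub hf

theorem fderiv_lagrangian_apply (hf : ContDiff ℝ ∞ f) (z v : PS n) :
    fderiv ℝ (lagrangian f) z v
      = ∑ j, (momentum j v * dp j f z + momentum j z * fderiv ℝ (dp j f) z v) - fderiv ℝ f z v := by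
  have hd : ∀ {u : PS n → ℂ}, ContDiff ℝ ∞ u → DifferentiableAt ℝ u z :=
    fun hu => hu.differentiable (by simp) z
  have hfp := fun j => hd (contDiff_dp hf j)
  unfold lagrangian
  rw [fderiv_fun_sub (by fun_prop) (hd hf), fderiv_fun_sum (u := Finset.univ)
    (A := fun j w => momentum j w * dp j f w) fun j _ => by fun_prop]
  simp only [sub_apply, sum_apply]
  congr 1
  refine Finset.sum_congr rfl fun j _ => ?_
  rw [fderiv_fun_mul (by fun_prop) (hfp j), (momentum j).fderiv]
  simp only [add_apply, smul_apply, smul_eq_mul]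
  ring

theorem dq_lagrangian (hf : ContDiff ℝ ∞ f) (i : Fin n) (z : PS n) :
    dq i (lagrangian f) z = ∑ j, momentum j z * dq i (dp j f) z - dq i f z := by
  simp [dq_eq_fderiv, fderiv_lagrangian_apply hf, vq]

theorem dp_lagrangian (hf : ContDiff ℝ ∞ f) (i : Fin n) (z : PS n) :
    dp i (lagrangian f) z = ∑ j, momentum j z * dp i (dp j f) z := by
  have hsingle : ∑ j, momentum j (vp i) * dp j f z = dp i f z := by
    simp [vp, Pi.single_apply, apply_ite Complex.ofReal, ite_mul]
  rw [dp_eq_fderiv, fderiv_lagrangian_apply hf, Finset.sum_add_distrib, hsingle]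
  exact add_sub_cancel_left _ _

theorem lagrangian_pb (hh : ContDiff ℝ ∞ h) (hf : ContDiff ℝ ∞ f) (z : PS n) :
    lagrangian (pb h f) z = pb h (lagrangian f) z + pb (lagrangian h) f z := by
  have hh2 : ContDiff ℝ 2 h := hh.of_le ENat.LEInfty.out
  have hf2 : ContDiff ℝ 2 f := hf.of_le ENat.LEInfty.out
  rw [lagrangian]
  simp only [dp_pb hh hf, Finset.mul_sum]
  rw [Finset.sum_comm]
  simp only [pb, dq_lagrangian, dp_lagrangian, hh, hf, dp_dp_comm hh2, dp_dp_comm hf2,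
    dp_dq_comm hh2, dp_dq_comm hf2, Finset.mul_sum, Finset.sum_mul, mul_sub, sub_mul, mul_add,
    Finset.sum_add_distrib, Finset.sum_sub_distrib, mul_assoc, mul_left_comm (momentum _ z)]
  ring

end Lagrangian

def prequantum (ℏ : ℝ) (h Ψ : PS n → ℂ) (z : PS n) : ℂ :=
  I * ℏ * pb h Ψ z - lagrangian h z * Ψ z

theorem prequantum_commutator (ℏ : ℝ) {h f Ψ : PS n → ℂ} (hh : ContDiff ℝ ∞ h)
    (hf : ContDiff ℝ ∞ f) (hΨ : ContDiff ℝ ∞ Ψ) (z : PS n) :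
    prequantum ℏ h (prequantum ℏ f Ψ) z - prequantum ℏ f (prequantum ℏ h Ψ) z
      = I * ℏ * prequantum ℏ (pb h f) Ψ z := by
  have hd : ∀ {u : PS n → ℂ}, ContDiff ℝ ∞ u → DifferentiableAt ℝ u z :=
    fun hu => hu.differentiable (by simp) z
  unfold prequantum
  rw [pb_sub_right (hd (contDiff_const.mul (contDiff_pb hf hΨ)))
      (hd ((contDiff_lagrangian hf).mul hΨ)),
    pb_const_mul_right (hd (contDiff_pb hf hΨ)), pb_mul_right (hd (contDiff_lagrangian hf)) (hd hΨ),
    pb_sub_right (hd (contDiff_const.mul (contDiff_pb hh hΨ)))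
      (hd ((contDiff_lagrangian hh).mul hΨ)),
    pb_const_mul_right (hd (contDiff_pb hh hΨ)), pb_mul_right (hd (contDiff_lagrangian hh)) (hd hΨ),
    ← pb_skew f (lagrangian h)]
  linear_combination I * ℏ * Ψ z * lagrangian_pb hh hf z
    - (I * ℏ) ^ 2 * pb_jacobi hh hf hΨ z

section RealValued

variable {H F : PS n → ℝ}

theorem dq_ofReal {z : PS n} (hH : DifferentiableAt ℝ H z) (i : Fin n) :
    dq i (fun w => (H w : ℂ)) z = dqR i H z :=
  fderiv_ofReal_comp_apply hH _

theorem dp_ofReal {z : PS n} (hH : DifferentiableAt ℝ H z) (i : Fin n) :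
    dp i (fun w => (H w : ℂ)) z = dpR i H z :=
  fderiv_ofReal_comp_apply hH _

theorem contDiff_pbR (hH : ContDiff ℝ ∞ H) (hF : ContDiff ℝ ∞ F) : ContDiff ℝ ∞ (pbR H F) :=
  ContDiff.sum fun _ _ =>
    ((hH.fderiv_apply_const _).mul (hF.fderiv_apply_const _)).sub
      ((hH.fderiv_apply_const _).mul (hF.fderiv_apply_const _))

theorem ofReal_pbR (hH : Differentiable ℝ H) (hF : Differentiable ℝ F) :
    (fun z => (pbR H F z : ℂ)) = pb (fun w => (H w : ℂ)) (fun w => (F w : ℂ)) := by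
  funext z
  simp only [pbR, pb, dq_ofReal (hH z), dp_ofReal (hH z), dq_ofReal (hF z), dp_ofReal (hF z)]
  push_cast
  rfl

theorem Liouv_eq_prequantum (hH : Differentiable ℝ H) (ℏ : ℝ) :
    Liouv ℏ H = prequantum ℏ (fun w => (H w : ℂ)) := by
  funext Ψ z
  simp only [Liouv, prequantum, lagrangian, momentum_apply, dp_ofReal (hH z)]
  push_cast
  rfl

end RealValued

theorem liouvillian_commutator_general (n : ℕ) (ℏ : ℝ)
    (H F : PS n → ℝ) (hH : ContDiff ℝ (⊤ : ℕ∞) H) (hF : ContDiff ℝ (⊤ : ℕ∞) F)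
    (Ψ : PS n → ℂ) (hΨ : ContDiff ℝ (⊤ : ℕ∞) Ψ) :
    ∀ z, Liouv ℏ H (Liouv ℏ F Ψ) z - Liouv ℏ F (Liouv ℏ H Ψ) z
      = Complex.I * ℏ * Liouv ℏ (pbR H F) Ψ z := by
  intro z
  have hHd : Differentiable ℝ H := hH.differentiable (by simp)
  have hFd : Differentiable ℝ F := hF.differentiable (by simp)
  rw [Liouv_eq_prequantum hHd, Liouv_eq_prequantum hFd,
    Liouv_eq_prequantum ((contDiff_pbR hH hF).differentiable (by simp)), ofReal_pbR hHd hFd]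
  exact prequantum_commutator ℏ (ofRealCLM.contDiff.comp hH) (ofRealCLM.contDiff.comp hF) hΨ z

/-- Commutator identity for covariant Liouvillians:
`[L̂_H, L̂_F] Ψ = iℏ L̂_{{H,F}} Ψ`. -/
theorem liouvillian_commutator (n : ℕ) (ℏ : ℝ) (hℏ : 0 < ℏ)
    (H F : PS n → ℝ) (hH : ContDiff ℝ (⊤ : ℕ∞) H) (hF : ContDiff ℝ (⊤ : ℕ∞) F)
    (Ψ : PS n → ℂ) (hΨ : ContDiff ℝ (⊤ : ℕ∞) Ψ) :
    ∀ z, Liouv ℏ H (Liouv ℏ F Ψ) z - Liouv ℏ F (Liouv ℏ H Ψ) z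
      = Complex.I * ℏ * Liouv ℏ (pbR H F) Ψ z :=
  liouvillian_commutator_general n ℏ H F hH hF Ψ hΨ
end
end

section
/- Madelung transform of the Schrödinger equation: let m > 0, ħ > 0, let V : ℝⁿ → ℝ be smooth, and let R, S : ℝ × ℝⁿ → ℝ be smooth with R(t,x) > 0 for all (t,x). Define ψ(t,x) := R(t,x) e^{i S(t,x)/ħ}. Then ψ satisfies the Schrödinger equation iħ ∂ₜψ = −(ħ²/(2m)) Δψ + V ψ if and only if the Madelung equations hold: ∂ₜS + |∇S|²/(2m) − (ħ²/(2m)) (ΔR)/R + V = 0 and ∂ₜR + (1/(2mR)) div(R² ∇S) = 0, where ∇, div and Δ are the spatial gradient, divergence and Laplacian on ℝⁿ. -/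
open Complex

noncomputable section

/-- Configuration space `ℝⁿ`. -/
abbrev Cfg (n : ℕ) := Fin n → ℝ

variable {n : ℕ}

/-- Spatial partial derivative `∂f/∂xⁱ` (complex-valued). -/
noncomputable def dx (i : Fin n) (f : Cfg n → ℂ) (x : Cfg n) : ℂ :=
  fderiv ℝ f x (Pi.single i 1)

/-- Spatial partial derivative `∂f/∂xⁱ` (real-valued). -/
noncomputable def dxR (i : Fin n) (f : Cfg n → ℝ) (x : Cfg n) : ℝ :=
  fderiv ℝ f x (Pi.single i 1)

/-- Laplacian `Δf = Σᵢ ∂²f/∂(xⁱ)²` (complex-valued). -/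
noncomputable def lapl (f : Cfg n → ℂ) (x : Cfg n) : ℂ :=
  ∑ i, dx i (fun y => dx i f y) x

/-- Laplacian `Δf = Σᵢ ∂²f/∂(xⁱ)²` (real-valued). -/
noncomputable def laplR (f : Cfg n → ℝ) (x : Cfg n) : ℝ :=
  ∑ i, dxR i (fun y => dxR i f y) x

/-!
Write `e = exp (i S / ℏ)`. The product and chain rules give
`∂ₜψ = (∂ₜR + i R ∂ₜS / ℏ) e` and `Δψ = (ΔR - R |∇S|² / ℏ² + i (2 ∇R·∇S + R ΔS) / ℏ) e`.
Since `e ≠ 0` it cancels from the Schrödinger equation, whose real part is then `-R` times the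
first Madelung equation and whose imaginary part is `ℏ` times the second, because
`div (R² ∇S) = R (2 ∇R·∇S + R ΔS)`.
-/

section PolarForm

variable {E : Type*} [NormedAddCommGroup E] [NormedSpace ℝ E] {x : E}

theorem HasFDerivAt.ofReal_comp {f : E → ℝ} {f' : E →L[ℝ] ℝ} (hf : HasFDerivAt f f' x) :
    HasFDerivAt (fun y => (f y : ℂ)) (ofRealCLM.comp f') x :=
  ofRealCLM.hasFDerivAt.comp x hf

theorem fderiv_ofReal_apply {f : E → ℝ} (hf : DifferentiableAt ℝ f x) (v : E) :
    fderiv ℝ (fun y => (f y : ℂ)) x v = fderiv ℝ f x v := by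
  rw [hf.hasFDerivAt.ofReal_comp.fderiv]
  rfl

theorem fderiv_ofReal_add_ofReal_mul_apply {a b : E → ℝ} (c : ℂ) (ha : DifferentiableAt ℝ a x)
    (hb : DifferentiableAt ℝ b x) (v : E) :
    fderiv ℝ (fun y => (a y : ℂ) + b y * c) x v = fderiv ℝ a x v + fderiv ℝ b x v * c := by
  have h : HasFDerivAt (fun y => (a y : ℂ) + b y * c) _ x :=
    ha.hasFDerivAt.ofReal_comp.add (hb.hasFDerivAt.ofReal_comp.mul_const c)
  rw [h.fderiv]
  simp [mul_comm]

theorem fderiv_mul_cexp_phase_apply {F : E → ℂ} {g : E → ℝ} (ℏ : ℝ) (hF : DifferentiableAt ℝ F x)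
    (hg : DifferentiableAt ℝ g x) (v : E) :
    fderiv ℝ (fun y => F y * cexp (I * g y / ℏ)) x v
      = (fderiv ℝ F x v + F x * (fderiv ℝ g x v * (I / ℏ))) * cexp (I * g x / ℏ) := by
  have hphase : HasFDerivAt (fun y => I * g y / ℏ) ((I / ℏ) • ofRealCLM.comp (fderiv ℝ g x)) x := by
    simpa only [mul_div_right_comm, ContinuousLinearMap.smul_def]
      using hg.hasFDerivAt.ofReal_comp.const_mul (I / ℏ)
  have h : HasFDerivAt (fun y => F y * cexp (I * g y / ℏ)) _ x := hF.hasFDerivAt.mul hphase.cexp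
  rw [h.fderiv]
  simp only [add_apply, smul_apply, ContinuousLinearMap.comp_apply, ofRealCLM_apply, smul_eq_mul]
  ring

theorem deriv_ofReal_mul_cexp_phase (ℏ : ℝ) {a b : ℝ → ℝ} {t : ℝ} (ha : DifferentiableAt ℝ a t)
    (hb : DifferentiableAt ℝ b t) :
    deriv (fun s => (a s : ℂ) * cexp (I * b s / ℏ)) t
      = (((deriv a t : ℝ) : ℂ) + a t * ((deriv b t : ℝ) * (I / ℏ))) * cexp (I * b t / ℏ) := by
  rw [← fderiv_apply_one_eq_deriv,
    fderiv_mul_cexp_phase_apply ℏ ha.hasFDerivAt.ofReal_comp.differentiableAt hb,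
    fderiv_ofReal_apply ha, fderiv_apply_one_eq_deriv, fderiv_apply_one_eq_deriv]

end PolarForm

section Madelung

theorem ContDiff.dxR {k : WithTop ℕ∞} {f : Cfg n → ℝ} (hf : ContDiff ℝ (k + 1) f) (i : Fin n) :
    ContDiff ℝ k (dxR i f) :=
  (ContinuousLinearMap.apply ℝ ℝ (Pi.single i 1 : Cfg n)).contDiff.comp (hf.fderiv_right le_rfl)

theorem dxR_mul {a b : Cfg n → ℝ} {x : Cfg n} (ha : DifferentiableAt ℝ a x)
    (hb : DifferentiableAt ℝ b x) (i : Fin n) :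
    dxR i (fun y => a y * b y) x = dxR i a x * b x + a x * dxR i b x := by
  simp only [dxR, fderiv_fun_mul ha hb, add_apply, smul_apply, smul_eq_mul]
  ring

variable {f g : Cfg n → ℝ}

theorem dx_ofReal_mul_cexp_phase (ℏ : ℝ) (hf : Differentiable ℝ f) (hg : Differentiable ℝ g)
    (i : Fin n) :
    dx i (fun y => (f y : ℂ) * cexp (I * g y / ℏ))
      = fun y => ((dxR i f y : ℂ) + (f y * dxR i g y : ℝ) * (I / ℏ)) * cexp (I * g y / ℏ) := by
  ext y
  rw [dx, fderiv_mul_cexp_phase_apply ℏ (hf y).hasFDerivAt.ofReal_comp.differentiableAt (hg y),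
    fderiv_ofReal_apply (hf y), dxR, dxR]
  push_cast
  ring

theorem lapl_ofReal_mul_cexp_phase (ℏ : ℝ) (hf : ContDiff ℝ 2 f) (hg : ContDiff ℝ 2 g)
    (x : Cfg n) :
    lapl (fun y => (f y : ℂ) * cexp (I * g y / ℏ)) x
      = ((laplR f x : ℂ) - f x * (∑ i, dxR i g x ^ 2 : ℝ) / ℏ ^ 2
          + (∑ i, (2 * dxR i f x * dxR i g x + f x * dxR i (dxR i g) x) : ℝ) * (I / ℏ))
        * cexp (I * g x / ℏ) := by
  have hf1 := hf.differentiable two_ne_zero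
  have hg1 := hg.differentiable two_ne_zero
  have hdf (i : Fin n) : Differentiable ℝ (dxR i f) := (hf.dxR i).differentiable one_ne_zero
  have hdg (i : Fin n) : Differentiable ℝ (dxR i g) := (hg.dxR i).differentiable one_ne_zero
  have hsecond (i : Fin n) : dx i (dx i (fun y => (f y : ℂ) * cexp (I * g y / ℏ))) x
      = ((dxR i (dxR i f) x : ℂ)
          + (dxR i f x * dxR i g x + f x * dxR i (dxR i g) x : ℝ) * (I / ℏ)
          + ((dxR i f x : ℂ) + (f x * dxR i g x : ℝ) * (I / ℏ)) * (dxR i g x * (I / ℏ)))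
        * cexp (I * g x / ℏ) := by
    rw [dx_ofReal_mul_cexp_phase ℏ hf1 hg1, dx, fderiv_mul_cexp_phase_apply ℏ _ (hg1 x),
      fderiv_ofReal_add_ofReal_mul_apply (b := fun y => f y * dxR i g y) _ (hdf i x)
        ((hf1 x).mul (hdg i x))]
    · rw [← dxR, ← dxR, dxR_mul (hf1 x) (hdg i x), ← dxR]
    · exact ((hdf i x).hasFDerivAt.ofReal_comp.add
        (((hf1.mul (hdg i)) x).hasFDerivAt.ofReal_comp.mul_const _)).differentiableAt
  simp only [lapl, laplR, hsecond, ← Finset.sum_mul]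
  congr 1
  push_cast
  simp only [Finset.mul_sum, Finset.sum_div, Finset.sum_mul, ← Finset.sum_sub_distrib,
    ← Finset.sum_add_distrib]
  refine Finset.sum_congr rfl fun i _ => ?_
  linear_combination (f x * dxR i g x ^ 2 / ℏ ^ 2 : ℂ) * I_sq

theorem sum_dxR_sq_mul_dxR (hf : Differentiable ℝ f) (hg : ContDiff ℝ 2 g) (x : Cfg n) :
    ∑ i, dxR i (fun y => f y ^ 2 * dxR i g y) x
      = f x * ∑ i, (2 * dxR i f x * dxR i g x + f x * dxR i (dxR i g) x) := by
  rw [Finset.mul_sum]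
  refine Finset.sum_congr rfl fun i _ => ?_
  rw [dxR_mul (a := fun y => f y ^ 2) ((hf x).pow 2) ((hg.dxR i).differentiable one_ne_zero x)]
  simp only [pow_two]
  rw [dxR_mul (hf x) (hf x)]
  ring

end Madelung

/-- The Schrödinger equation at one point `(t, x)`, after the derivatives of `ψ` have been
expanded: `Q = |∇S|²`, `D = 2 ∇R·∇S + R ΔS` and `e = exp (i S / ℏ)`. -/
theorem schroedinger_polar_iff_madelung {m ℏ V R Rₜ Sₜ ΔR Q D : ℝ} {e : ℂ} (hm : m ≠ 0) (hℏ : ℏ ≠ 0)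
    (hR : R ≠ 0) (he : e ≠ 0) :
    I * ℏ * (((Rₜ : ℂ) + R * (Sₜ * (I / ℏ))) * e)
        = -(ℏ ^ 2 / (2 * m)) * (((ΔR : ℂ) - R * Q / ℏ ^ 2 + D * (I / ℏ)) * e) + V * (R * e)
      ↔ (Sₜ + Q / (2 * m) - ℏ ^ 2 / (2 * m) * ΔR / R + V = 0)
        ∧ (Rₜ + 1 / (2 * m * R) * (R * D) = 0) := by
  rw [← sub_eq_zero]
  trans (((-R * (Sₜ + Q / (2 * m) - ℏ ^ 2 / (2 * m) * ΔR / R + V) : ℝ) : ℂ)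
    + ((ℏ * (Rₜ + 1 / (2 * m * R) * (R * D)) : ℝ) : ℂ) * I) * e = 0
  · apply Iff.of_eq
    congr 1
    have hℏ' : (ℏ : ℂ) ≠ 0 := ofReal_ne_zero.mpr hℏ
    have hm' : (m : ℂ) ≠ 0 := ofReal_ne_zero.mpr hm
    have hR' : (R : ℂ) ≠ 0 := ofReal_ne_zero.mpr hR
    push_cast
    field_simp
    linear_combination (2 * m * R * Sₜ) * I_sq
  · simp only [mul_eq_zero, he, or_false, Complex.ext_iff, add_re, add_im, ofReal_re, ofReal_im,
      mul_re, mul_im, I_re, I_im, zero_re, zero_im]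
    simp [hR, hℏ]

theorem madelung_schroedinger_general (n : ℕ) (m ℏ : ℝ) (hm : 0 < m) (hℏ : 0 < ℏ)
    (V : Cfg n → ℝ)
    (R S : ℝ × Cfg n → ℝ)
    (hR : ContDiff ℝ (⊤ : ℕ∞) R) (hS : ContDiff ℝ (⊤ : ℕ∞) S)
    (hpos : ∀ t x, 0 < R (t, x)) :
    (∀ (t : ℝ) (x : Cfg n),
        Complex.I * ℏ * deriv (fun s => (R (s, x) : ℂ) * Complex.exp (Complex.I * S (s, x) / ℏ)) t
          = -(ℏ ^ 2 / (2 * m)) *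
              lapl (fun y => (R (t, y) : ℂ) * Complex.exp (Complex.I * S (t, y) / ℏ)) x
            + (V x : ℂ) * ((R (t, x) : ℂ) * Complex.exp (Complex.I * S (t, x) / ℏ)))
      ↔
    (∀ (t : ℝ) (x : Cfg n),
        (deriv (fun s => S (s, x)) t + (∑ i, dxR i (fun y => S (t, y)) x ^ 2) / (2 * m)
            - (ℏ ^ 2 / (2 * m)) * laplR (fun y => R (t, y)) x / R (t, x) + V x = 0)
          ∧ (deriv (fun s => R (s, x)) t
              + (1 / (2 * m * R (t, x))) *
                  (∑ i, dxR i (fun y => R (t, y) ^ 2 * dxR i (fun y' => S (t, y')) y) x) = 0)) := by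
  refine forall_congr' fun t => forall_congr' fun x => ?_
  have hR₂ : ContDiff ℝ 2 R := hR.of_le (WithTop.coe_le_coe.mpr le_top)
  have hS₂ : ContDiff ℝ 2 S := hS.of_le (WithTop.coe_le_coe.mpr le_top)
  have hRx : ContDiff ℝ 2 fun y => R (t, y) := hR₂.comp (contDiff_const.prodMk contDiff_id)
  have hSx : ContDiff ℝ 2 fun y => S (t, y) := hS₂.comp (contDiff_const.prodMk contDiff_id)
  have hRt : Differentiable ℝ fun s => R (s, x) :=
    (hR₂.comp (contDiff_id.prodMk contDiff_const)).differentiable two_ne_zero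
  have hSt : Differentiable ℝ fun s => S (s, x) :=
    (hS₂.comp (contDiff_id.prodMk contDiff_const)).differentiable two_ne_zero
  rw [deriv_ofReal_mul_cexp_phase ℏ (hRt t) (hSt t), lapl_ofReal_mul_cexp_phase ℏ hRx hSx x,
    sum_dxR_sq_mul_dxR (hRx.differentiable two_ne_zero) hSx x]
  exact schroedinger_polar_iff_madelung hm.ne' hℏ.ne' (hpos t x).ne' (exp_ne_zero _)

/-- The Madelung transform: `ψ = R e^{iS/ℏ}` solves the
Schrödinger equation iff `(S, R)` solve the Madelung equations. -/
theorem madelung_schroedinger (n : ℕ) (m ℏ : ℝ) (hm : 0 < m) (hℏ : 0 < ℏ)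
    (V : Cfg n → ℝ) (hV : ContDiff ℝ (⊤ : ℕ∞) V)
    (R S : ℝ × Cfg n → ℝ)
    (hR : ContDiff ℝ (⊤ : ℕ∞) R) (hS : ContDiff ℝ (⊤ : ℕ∞) S)
    (hpos : ∀ t x, 0 < R (t, x)) :
    (∀ (t : ℝ) (x : Cfg n),
        Complex.I * ℏ * deriv (fun s => (R (s, x) : ℂ) * Complex.exp (Complex.I * S (s, x) / ℏ)) t
          = -(ℏ ^ 2 / (2 * m)) *
              lapl (fun y => (R (t, y) : ℂ) * Complex.exp (Complex.I * S (t, y) / ℏ)) x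
            + (V x : ℂ) * ((R (t, x) : ℂ) * Complex.exp (Complex.I * S (t, x) / ℏ)))
      ↔
    (∀ (t : ℝ) (x : Cfg n),
        (deriv (fun s => S (s, x)) t + (∑ i, dxR i (fun y => S (t, y)) x ^ 2) / (2 * m)
            - (ℏ ^ 2 / (2 * m)) * laplR (fun y => R (t, y)) x / R (t, x) + V x = 0)
          ∧ (deriv (fun s => R (s, x)) t
              + (1 / (2 * m * R (t, x))) *
                  (∑ i, dxR i (fun y => R (t, y) ^ 2 * dxR i (fun y' => S (t, y')) y) x) = 0)) :=
  madelung_schroedinger_general n m ℏ hm hℏ V R S hR hS hpos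
end
end

section
/- Equivariance of the covariant Liouvillian under strict contact transformations: let η : ℝ²ⁿ → ℝ²ⁿ be a smooth diffeomorphism and φ : ℝ²ⁿ → ℝ a smooth function satisfying η*𝒜 + dφ = 𝒜, i.e. for every z ∈ ℝ²ⁿ and every tangent vector v ∈ ℝ²ⁿ, 𝒜_{η(z)}(Dη(z)v) + Dφ(z)v = 𝒜_z(v). For smooth Ψ : ℝ²ⁿ → ℂ define (UΨ)(z) := Ψ(η⁻¹(z)) · exp(−i φ(η⁻¹(z))/ħ). Then for every smooth H : ℝ²ⁿ → ℝ and every smooth Ψ one has L̂_H(UΨ) = U(L̂_{H∘η} Ψ). -/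
/-! Differentiating the contact identity `𝒜_{η z}(Dη v) + dφ(v) = 𝒜_z(v)` in a second direction
and antisymmetrising kills the symmetric second derivatives of `η` and `φ`, so `Dη` preserves the
symplectic form `d𝒜`. Hence `Dη⁻¹` carries the Hamiltonian vector field `X_H` to `X_{H∘η}`.
In terms of `X_K` the Liouvillian reads `L̂_K Ψ = iħ dΨ(X_K) + (𝒜(X_K) + K) Ψ`; differentiating the
phase factor `exp(−iφ/ħ)` along `X_{H∘η}` produces `dφ(X_{H∘η}) = 𝒜(X_{H∘η}) − 𝒜(X_H)∘η`, which
turns the multiplication term of `L̂_H` into that of `L̂_{H∘η}`. -/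

open Complex

noncomputable section

variable {n : ℕ}

/-- The canonical one-form `𝒜_z(δq, δp) = Σᵢ pᵢ δqⁱ` on phase space. -/
noncomputable def Acan (z v : PS n) : ℝ := ∑ i, z.2 i * v.1 i

section NormedSpace

variable {E F : Type*} [NormedAddCommGroup E] [NormedSpace ℝ E]
  [NormedAddCommGroup F] [NormedSpace ℝ F]

theorem contact_identity_fderiv (B : E →L[ℝ] E →L[ℝ] ℝ) {η : E → E} {φ : E → ℝ}
    (hη : ContDiff ℝ 2 η) (hφ : ContDiff ℝ 2 φ)
    (hcontact : ∀ z v, B (η z) (fderiv ℝ η z v) + fderiv ℝ φ z v = B z v) (z u v : E) :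
    B (η z) (fderiv ℝ (fderiv ℝ η) z u v) + B (fderiv ℝ η z u) (fderiv ℝ η z v)
      + fderiv ℝ (fderiv ℝ φ) z u v = B u v := by
  have hη₁ : ContDiff ℝ 1 (fderiv ℝ η) := hη.fderiv_right (by norm_num)
  have hφ₁ : ContDiff ℝ 1 (fderiv ℝ φ) := hφ.fderiv_right (by norm_num)
  have hDη := (hη₁.differentiable one_ne_zero z).hasFDerivAt.clm_apply (hasFDerivAt_const v z)
  have hDφ := (hφ₁.differentiable one_ne_zero z).hasFDerivAt.clm_apply (hasFDerivAt_const v z)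
  have hlhs := (B.hasFDerivAt_of_bilinear (hη.differentiable two_ne_zero z).hasFDerivAt
    hDη).fun_add hDφ
  rw [funext fun w => hcontact w v] at hlhs
  simpa [add_assoc] using DFunLike.congr_fun (hlhs.unique (B.flip v).hasFDerivAt) u

theorem alternate_fderiv_eq_of_contact (B : E →L[ℝ] E →L[ℝ] ℝ) {η : E → E} {φ : E → ℝ}
    (hη : ContDiff ℝ 2 η) (hφ : ContDiff ℝ 2 φ)
    (hcontact : ∀ z v, B (η z) (fderiv ℝ η z v) + fderiv ℝ φ z v = B z v) (z u v : E) :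
    B (fderiv ℝ η z u) (fderiv ℝ η z v) - B (fderiv ℝ η z v) (fderiv ℝ η z u)
      = B u v - B v u := by
  have huv := contact_identity_fderiv B hη hφ hcontact z u v
  have hvu := contact_identity_fderiv B hη hφ hcontact z v u
  rw [(hη.contDiffAt.isSymmSndFDerivAt (by simp)) u v,
    (hφ.contDiffAt.isSymmSndFDerivAt (by simp)) u v] at huv
  linarith

theorem fderiv_apply_fderiv_of_rightInverse {η : E → F} {ηinv : F → E}
    (hri : Function.RightInverse ηinv η) {z : F}
    (hη : DifferentiableAt ℝ η (ηinv z)) (hηinv : DifferentiableAt ℝ ηinv z) (v : F) :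
    fderiv ℝ η (ηinv z) (fderiv ℝ ηinv z v) = v := by
  have h := fderiv_comp z hη hηinv
  rw [hri.comp_eq_id, fderiv_id] at h
  exact (DFunLike.congr_fun h v).symm

theorem fderiv_mul_cexp_phase (ℏ : ℝ) {Ψ : E → ℂ} {φ : E → ℝ} {x : E}
    (hΨ : DifferentiableAt ℝ Ψ x) (hφ : DifferentiableAt ℝ φ x) (v : E) :
    fderiv ℝ (fun y => Ψ y * exp (-(I * φ y / ℏ))) x v
      = (fderiv ℝ Ψ x v - I / ℏ * fderiv ℝ φ x v * Ψ x) * exp (-(I * φ x / ℏ)) := by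
  have hphase := (ofRealCLM.hasFDerivAt.comp x hφ.hasFDerivAt).const_mul (-(I / ℏ))
  have hfun : (fun y => Ψ y * exp (-(I * φ y / ℏ)))
      = fun y => Ψ y * exp (-(I / ℏ) * (ofRealCLM ∘ φ) y) := by
    funext y
    simp only [Function.comp_apply, ofRealCLM_apply]
    ring_nf
  rw [hfun, (hΨ.hasFDerivAt.fun_mul hphase.cexp).fderiv]
  simp only [add_apply, smul_apply, Function.comp_apply, ContinuousLinearMap.comp_apply,
    ofRealCLM_apply, smul_eq_mul]
  rw [show -(I / ℏ) * (φ x : ℂ) = -(I * φ x / ℏ) by ring]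
  ring

end NormedSpace

theorem clm_apply_eq_sum_single {F : Type*} [NormedAddCommGroup F] [NormedSpace ℝ F]
    (L : PS n →L[ℝ] F) (v : PS n) :
    L v = ∑ i, v.1 i • L (Pi.single i 1, 0) + ∑ i, v.2 i • L (0, Pi.single i 1) := by
  have hv : v = ∑ i, v.1 i • ((Pi.single i 1, 0) : PS n)
      + ∑ i, v.2 i • ((0, Pi.single i 1) : PS n) := by
    ext j <;> simp [Prod.fst_sum, Prod.snd_sum, Finset.sum_apply, Pi.single_apply]
  conv_lhs => rw [hv]
  simp only [map_add, map_sum, map_smul]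

theorem fderiv_apply_eq_sum_dqR_dpR (f : PS n → ℝ) (z v : PS n) :
    fderiv ℝ f z v = ∑ i, v.1 i * dqR i f z + ∑ i, v.2 i * dpR i f z :=
  clm_apply_eq_sum_single _ v

def acanCLM : PS n →L[ℝ] PS n →L[ℝ] ℝ :=
  ∑ i, ((ContinuousLinearMap.proj i).comp (ContinuousLinearMap.snd ℝ _ _)).smulRight
    ((ContinuousLinearMap.proj i).comp (ContinuousLinearMap.fst ℝ _ _))

@[simp]
theorem acanCLM_apply (z v : PS n) : acanCLM z v = Acan z v := by
  simp [acanCLM, Acan]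

/-- The exterior derivative `d𝒜 = Σᵢ dpᵢ ∧ dqⁱ` of the canonical one-form. -/
def symplecticForm (u v : PS n) : ℝ := Acan u v - Acan v u

/-- The sign is chosen so that `{K, Ψ} = dΨ(X_K)`. -/
def hamiltonianVectorField (K : PS n → ℝ) (z : PS n) : PS n :=
  (fun i => -dpR i K z, fun i => dqR i K z)

theorem symplecticForm_hamiltonianVectorField (K : PS n → ℝ) (z v : PS n) :
    symplecticForm (hamiltonianVectorField K z) v = fderiv ℝ K z v := by
  simp only [symplecticForm, Acan, hamiltonianVectorField, fderiv_apply_eq_sum_dqR_dpR,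
    ← Finset.sum_sub_distrib, ← Finset.sum_add_distrib]
  refine Finset.sum_congr rfl fun i _ => ?_
  ring

theorem eq_of_symplecticForm_eq {u u' : PS n}
    (h : ∀ v, symplecticForm u v = symplecticForm u' v) : u = u' := by
  ext i
  · simpa [symplecticForm, Acan, Pi.single_apply] using h (0, Pi.single i 1)
  · simpa [symplecticForm, Acan, Pi.single_apply] using h (Pi.single i 1, 0)

theorem symplecticForm_fderiv_of_contact {η : PS n → PS n} {φ : PS n → ℝ}
    (hη : ContDiff ℝ 2 η) (hφ : ContDiff ℝ 2 φ)
    (hcontact : ∀ z v, Acan (η z) (fderiv ℝ η z v) + fderiv ℝ φ z v = Acan z v)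
    (z u v : PS n) :
    symplecticForm (fderiv ℝ η z u) (fderiv ℝ η z v) = symplecticForm u v := by
  simpa [symplecticForm] using
    alternate_fderiv_eq_of_contact acanCLM hη hφ (by simpa using hcontact) z u v

theorem fderiv_hamiltonianVectorField_of_rightInverse {η ηinv : PS n → PS n} {z : PS n}
    (hri : Function.RightInverse ηinv η)
    (hη : DifferentiableAt ℝ η (ηinv z)) (hηinv : DifferentiableAt ℝ ηinv z)
    (hsymp : ∀ u v, symplecticForm (fderiv ℝ η (ηinv z) u) (fderiv ℝ η (ηinv z) v)
      = symplecticForm u v)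
    {H : PS n → ℝ} (hH : DifferentiableAt ℝ H z) :
    fderiv ℝ ηinv z (hamiltonianVectorField H z)
      = hamiltonianVectorField (fun w => H (η w)) (ηinv z) := by
  refine eq_of_symplecticForm_eq fun v => ?_
  have hchain := fderiv_comp (ηinv z) ((hri z).symm ▸ hH : DifferentiableAt ℝ H (η (ηinv z))) hη
  rw [← hsymp, fderiv_apply_fderiv_of_rightInverse hri hη hηinv,
    symplecticForm_hamiltonianVectorField, symplecticForm_hamiltonianVectorField,
    show (fun w => H (η w)) = H ∘ η from rfl, hchain, hri z]
  rfl

theorem pb_ofReal_eq_fderiv_hamiltonianVectorField {K : PS n → ℝ} {z : PS n}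
    (hK : DifferentiableAt ℝ K z) (Ψ : PS n → ℂ) :
    pb (fun w => (K w : ℂ)) Ψ z = fderiv ℝ Ψ z (hamiltonianVectorField K z) := by
  have hK' : fderiv ℝ (fun w => (K w : ℂ)) z = ofRealCLM.comp (fderiv ℝ K z) :=
    (ofRealCLM.hasFDerivAt.comp z hK.hasFDerivAt).fderiv
  rw [clm_apply_eq_sum_single (fderiv ℝ Ψ z), pb, ← Finset.sum_add_distrib]
  refine Finset.sum_congr rfl fun i _ => ?_
  simp only [dq, dp, dqR, dpR, hK', hamiltonianVectorField, ContinuousLinearMap.comp_apply,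
    ofRealCLM_apply, real_smul, ofReal_neg]
  ring

theorem Liouv_eq_fderiv_hamiltonianVectorField (ℏ : ℝ) {K : PS n → ℝ} {z : PS n}
    (hK : DifferentiableAt ℝ K z) (Ψ : PS n → ℂ) :
    Liouv ℏ K Ψ z = I * ℏ * fderiv ℝ Ψ z (hamiltonianVectorField K z)
      + ((Acan z (hamiltonianVectorField K z) + K z : ℝ) : ℂ) * Ψ z := by
  have hmomentum : ∑ i, z.2 i * dpR i K z = -Acan z (hamiltonianVectorField K z) := by
    simp [Acan, hamiltonianVectorField]
  rw [Liouv, pb_ofReal_eq_fderiv_hamiltonianVectorField hK, hmomentum]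
  push_cast
  ring

theorem liouvillian_contact_equivariance_general (n : ℕ) (ℏ : ℝ) (hℏ : 0 < ℏ)
    (η ηinv : PS n → PS n)
    (hη : ContDiff ℝ (⊤ : ℕ∞) η) (hηinv : ContDiff ℝ (⊤ : ℕ∞) ηinv)
    (hri : Function.RightInverse ηinv η)
    (φ : PS n → ℝ) (hφ : ContDiff ℝ (⊤ : ℕ∞) φ)
    (hcontact : ∀ z v, Acan (η z) (fderiv ℝ η z v) + fderiv ℝ φ z v = Acan z v)
    (H : PS n → ℝ) (hH : ContDiff ℝ (⊤ : ℕ∞) H)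
    (Ψ : PS n → ℂ) (hΨ : ContDiff ℝ (⊤ : ℕ∞) Ψ) :
    ∀ z, Liouv ℏ H
        (fun w => Ψ (ηinv w) * Complex.exp (-(Complex.I * φ (ηinv w) / ℏ))) z
      = Liouv ℏ (fun w => H (η w)) Ψ (ηinv z)
          * Complex.exp (-(Complex.I * φ (ηinv z) / ℏ)) := by
  intro z
  have hηd := hη.differentiable (by simp)
  have hηinvd := hηinv.differentiable (by simp)
  have hφd := hφ.differentiable (by simp)
  have hHd := hH.differentiable (by simp)
  have hΨd := hΨ.differentiable (by simp)
  have hX := fderiv_hamiltonianVectorField_of_rightInverse hri (hηd (ηinv z)) (hηinvd z)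
    (symplecticForm_fderiv_of_contact (hη.of_le (by norm_cast)) (hφ.of_le (by norm_cast))
      hcontact (ηinv z)) (hHd z)
  set X := hamiltonianVectorField (fun w => H (η w)) (ηinv z)
  have hpush : fderiv ℝ η (ηinv z) X = hamiltonianVectorField H z := by
    rw [← hX, fderiv_apply_fderiv_of_rightInverse hri (hηd _) (hηinvd z)]
  have hphase : fderiv ℝ φ (ηinv z) X = Acan (ηinv z) X - Acan z (hamiltonianVectorField H z) := by
    have := hcontact (ηinv z) X
    rw [hpush, hri z] at this
    linarith
  have hU := fderiv_fun_comp (g := fun y => Ψ y * exp (-(I * φ y / ℏ))) z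
    (by fun_prop) (hηinvd z)
  beta_reduce at hU
  rw [Liouv_eq_fderiv_hamiltonianVectorField ℏ (hHd z),
    Liouv_eq_fderiv_hamiltonianVectorField ℏ (K := fun w => H (η w)) ((hHd.comp hηd) (ηinv z)),
    hU, ContinuousLinearMap.comp_apply, hX, fderiv_mul_cexp_phase ℏ (hΨd _) (hφd _), hphase, hri z]
  have hℏ0 : (ℏ : ℂ) ≠ 0 := by exact_mod_cast hℏ.ne'
  field_simp
  push_cast
  linear_combination (-(Ψ (ηinv z) * (Acan (ηinv z) X - Acan z (hamiltonianVectorField H z) : ℂ)))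
    * I_sq

/-- Equivariance of the covariant Liouvillian under strict
contact transformations: if `η*𝒜 + dφ = 𝒜` and
`(UΨ)(z) = Ψ(η⁻¹ z) exp(−iφ(η⁻¹ z)/ℏ)`, then `L̂_H (UΨ) = U (L̂_{H∘η} Ψ)`. -/
theorem liouvillian_contact_equivariance (n : ℕ) (ℏ : ℝ) (hℏ : 0 < ℏ)
    (η ηinv : PS n → PS n)
    (hη : ContDiff ℝ (⊤ : ℕ∞) η) (hηinv : ContDiff ℝ (⊤ : ℕ∞) ηinv)
    (hli : Function.LeftInverse ηinv η) (hri : Function.RightInverse ηinv η)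
    (φ : PS n → ℝ) (hφ : ContDiff ℝ (⊤ : ℕ∞) φ)
    (hcontact : ∀ z v, Acan (η z) (fderiv ℝ η z v) + fderiv ℝ φ z v = Acan z v)
    (H : PS n → ℝ) (hH : ContDiff ℝ (⊤ : ℕ∞) H)
    (Ψ : PS n → ℂ) (hΨ : ContDiff ℝ (⊤ : ℕ∞) Ψ) :
    ∀ z, Liouv ℏ H
        (fun w => Ψ (ηinv w) * Complex.exp (-(Complex.I * φ (ηinv w) / ℏ))) z
      = Liouv ℏ (fun w => H (η w)) Ψ (ηinv z)
          * Complex.exp (-(Complex.I * φ (ηinv z) / ℏ)) :=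
  liouvillian_contact_equivariance_general n ℏ hℏ η ηinv hη hηinv hri φ hφ hcontact H hH Ψ hΨ
end
end

section
/- For every smooth R : (ℝⁿ × ℝⁿ) × ℝᵐ → ℝ with R(z,x) > 0 everywhere, the identity (1/2) {R², (Δₓ R)/R} = Σ_{k=1}^{m} ∂_{xᵏ} {R, ∂_{xᵏ} R} holds pointwise, where the Poisson bracket {·,·} is taken in the phase-space variables z = (q,p) only and Δₓ := Σₖ ∂²_{xᵏ} is the Laplacian in the x variables. -/
open Complex

noncomputable section

variable {n : ℕ}

/-- Hybrid quantum–classical coordinate space `Γ = ℝ²ⁿ × ℝᵈ`. -/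
abbrev Hyb (n d : ℕ) := PS n × (Fin d → ℝ)

variable {d : ℕ}

/-- `∂f/∂qⁱ` on the hybrid space (real-valued). -/
noncomputable def dqH (i : Fin n) (f : Hyb n d → ℝ) (w : Hyb n d) : ℝ :=
  fderiv ℝ f w ((Pi.single i 1, 0), 0)

/-- `∂f/∂pᵢ` on the hybrid space (real-valued). -/
noncomputable def dpH (i : Fin n) (f : Hyb n d → ℝ) (w : Hyb n d) : ℝ :=
  fderiv ℝ f w ((0, Pi.single i 1), 0)

/-- `∂f/∂xᵏ` on the hybrid space (real-valued). -/
noncomputable def dxH (k : Fin d) (f : Hyb n d → ℝ) (w : Hyb n d) : ℝ :=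
  fderiv ℝ f w (0, Pi.single k 1)

/-- Canonical Poisson bracket in the phase-space variables `z = (q,p)` only,
pointwise in the quantum coordinate `x`. -/
noncomputable def pbH (F G : Hyb n d → ℝ) (w : Hyb n d) : ℝ :=
  ∑ i, (dqH i F w * dpH i G w - dpH i F w * dqH i G w)

/-- Laplacian `Δₓ` in the quantum variables `x` (real-valued). -/
noncomputable def laplxH (f : Hyb n d → ℝ) (w : Hyb n d) : ℝ :=
  ∑ k, dxH k (fun w' => dxH k f w') w

/-!
Leibniz's rule gives `{R², G} = 2R {R, G}`, and the quotient rule together with `{R, R} = 0`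
turns `(1/2) {R², ΔR / R}` into `{R, ΔR}`. On the other side, `∂ₖ` commutes with the phase-space
derivatives (Schwarz), so `∂ₖ {R, ∂ₖR} = {∂ₖR, ∂ₖR} + {R, ∂ₖ²R} = {R, ∂ₖ²R}`; summing over `k`
gives `{R, ΔR}` again.
-/

section DirectionalDerivative

variable {E : Type*} [NormedAddCommGroup E] [NormedSpace ℝ E]

def dirDeriv (v : E) (f : E → ℝ) : E → ℝ :=
  fun w => fderiv ℝ f w v

variable {f g : E → ℝ} {w : E}

theorem ContDiff.dirDeriv {m n : WithTop ℕ∞} (hf : ContDiff ℝ n f) (hmn : m + 1 ≤ n) (v : E) :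
    ContDiff ℝ m (_root_.dirDeriv v f) :=
  (hf.fderiv_right hmn).clm_apply contDiff_const

theorem dirDeriv_comm (hf : ContDiffAt ℝ 2 f w) (u v : E) :
    dirDeriv u (dirDeriv v f) w = dirDeriv v (dirDeriv u f) w := by
  have hdiff : DifferentiableAt ℝ (fderiv ℝ f) w :=
    (hf.fderiv_right (m := 1) le_rfl).differentiableAt one_ne_zero
  have hsymm : IsSymmSndFDerivAt ℝ f w := hf.isSymmSndFDerivAt (by simp)
  change fderiv ℝ (fun w' => fderiv ℝ f w' v) w u = fderiv ℝ (fun w' => fderiv ℝ f w' u) w v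
  rw [fderiv_clm_apply hdiff (differentiableAt_const v),
    fderiv_clm_apply hdiff (differentiableAt_const u)]
  simpa using hsymm u v

theorem dirDeriv_mul (hf : DifferentiableAt ℝ f w) (hg : DifferentiableAt ℝ g w) (v : E) :
    dirDeriv v (fun w => f w * g w) w = dirDeriv v f w * g w + f w * dirDeriv v g w := by
  simp only [dirDeriv, fderiv_fun_mul hf hg]
  simp [mul_comm, add_comm]

theorem dirDeriv_sq (hf : DifferentiableAt ℝ f w) (v : E) :
    dirDeriv v (fun w => f w ^ 2) w = 2 * f w * dirDeriv v f w := by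
  simp only [sq, dirDeriv_mul hf hf]
  ring

theorem dirDeriv_inv (hf : DifferentiableAt ℝ f w) (hfw : f w ≠ 0) (v : E) :
    dirDeriv v (fun w => (f w)⁻¹) w = -dirDeriv v f w / f w ^ 2 := by
  have h := ((hasFDerivAt_inv hfw).comp w hf.hasFDerivAt).fderiv
  simp only [dirDeriv, Function.comp_def] at h ⊢
  simp [h, div_eq_mul_inv, mul_comm]

theorem dirDeriv_div (hf : DifferentiableAt ℝ f w) (hg : DifferentiableAt ℝ g w) (hgw : g w ≠ 0)
    (v : E) :
    dirDeriv v (fun w => f w / g w) w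
      = (dirDeriv v f w * g w - f w * dirDeriv v g w) / g w ^ 2 := by
  simp only [div_eq_mul_inv]
  rw [dirDeriv_mul hf (hg.fun_inv hgw), dirDeriv_inv hg hgw]
  field_simp
  ring

theorem dirDeriv_sub (hf : DifferentiableAt ℝ f w) (hg : DifferentiableAt ℝ g w) (v : E) :
    dirDeriv v (fun w => f w - g w) w = dirDeriv v f w - dirDeriv v g w := by
  simp [dirDeriv, fderiv_fun_sub hf hg]

theorem dirDeriv_sum {ι : Type*} {s : Finset ι} {F : ι → E → ℝ}
    (hF : ∀ i ∈ s, DifferentiableAt ℝ (F i) w) (v : E) :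
    dirDeriv v (fun w => ∑ i ∈ s, F i w) w = ∑ i ∈ s, dirDeriv v (F i) w := by
  simp [dirDeriv, fderiv_fun_sum hF]

end DirectionalDerivative

section DirectionalBracket

variable {E ι : Type*} [NormedAddCommGroup E] [NormedSpace ℝ E] [Fintype ι]

def dirBracket (a b : ι → E) (F G : E → ℝ) : E → ℝ :=
  fun w => ∑ i, (dirDeriv (a i) F w * dirDeriv (b i) G w - dirDeriv (b i) F w * dirDeriv (a i) G w)

variable {a b : ι → E} {F G H : E → ℝ} {w : E}

theorem dirBracket_self (a b : ι → E) (F : E → ℝ) : dirBracket a b F F = 0 := by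
  funext w
  simp [dirBracket, mul_comm]

theorem dirBracket_sq_left (hF : DifferentiableAt ℝ F w) (G : E → ℝ) :
    dirBracket a b (fun w => F w ^ 2) G w = 2 * F w * dirBracket a b F G w := by
  simp only [dirBracket, dirDeriv_sq hF, Finset.mul_sum]
  congr! 1 with i
  ring

theorem dirBracket_div_right (hG : DifferentiableAt ℝ G w) (hH : DifferentiableAt ℝ H w)
    (hHw : H w ≠ 0) (F : E → ℝ) :
    dirBracket a b F (fun w => G w / H w) w
      = (dirBracket a b F G w * H w - G w * dirBracket a b F H w) / H w ^ 2 := by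
  rw [eq_div_iff (pow_ne_zero 2 hHw)]
  simp only [dirBracket, dirDeriv_div hG hH hHw, Finset.sum_mul, Finset.mul_sum,
    ← Finset.sum_sub_distrib]
  congr! 1 with i
  field_simp
  ring

theorem dirBracket_sum_right {κ : Type*} {s : Finset κ} {G : κ → E → ℝ}
    (hG : ∀ k ∈ s, DifferentiableAt ℝ (G k) w) (F : E → ℝ) :
    dirBracket a b F (fun w => ∑ k ∈ s, G k w) w = ∑ k ∈ s, dirBracket a b F (G k) w := by
  simp only [dirBracket, dirDeriv_sum hG, Finset.mul_sum, ← Finset.sum_sub_distrib]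
  exact Finset.sum_comm

theorem dirDeriv_dirBracket (hF : ContDiff ℝ 2 F) (hG : ContDiff ℝ 2 G) (v : E) :
    dirDeriv v (dirBracket a b F G) w
      = dirBracket a b (dirDeriv v F) G w + dirBracket a b F (dirDeriv v G) w := by
  have hF' : ∀ u, Differentiable ℝ (dirDeriv u F) := fun u =>
    (hF.dirDeriv (m := 1) (by norm_num) u).differentiable one_ne_zero
  have hG' : ∀ u, Differentiable ℝ (dirDeriv u G) := fun u =>
    (hG.dirDeriv (m := 1) (by norm_num) u).differentiable one_ne_zero
  unfold dirBracket
  rw [dirDeriv_sum fun i _ =>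
      ((hF' (a i) w).fun_mul (hG' (b i) w)).fun_sub ((hF' (b i) w).fun_mul (hG' (a i) w)),
    ← Finset.sum_add_distrib]
  refine Finset.sum_congr rfl fun i _ => ?_
  rw [dirDeriv_sub ((hF' _ w).fun_mul (hG' _ w)) ((hF' _ w).fun_mul (hG' _ w)),
    dirDeriv_mul (hF' _ w) (hG' _ w), dirDeriv_mul (hF' _ w) (hG' _ w),
    dirDeriv_comm hF.contDiffAt v (a i), dirDeriv_comm hF.contDiffAt v (b i),
    dirDeriv_comm hG.contDiffAt v (a i), dirDeriv_comm hG.contDiffAt v (b i)]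
  ring

end DirectionalBracket

section Laplacian

variable {E ι κ : Type*} [NormedAddCommGroup E] [NormedSpace ℝ E] [Fintype ι] [Fintype κ]

def dirLaplacian (c : κ → E) (f : E → ℝ) : E → ℝ :=
  fun w => ∑ k, dirDeriv (c k) (dirDeriv (c k) f) w

theorem half_dirBracket_sq_dirLaplacian_div (a b : ι → E) (c : κ → E) {R : E → ℝ} {w : E}
    (hR : ContDiff ℝ 3 R) (hRw : R w ≠ 0) :
    (1 / 2) * dirBracket a b (fun w => R w ^ 2) (fun w => dirLaplacian c R w / R w) w
      = ∑ k, dirDeriv (c k) (dirBracket a b R (dirDeriv (c k) R)) w := by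
  have hR₂ : ∀ v, ContDiff ℝ 2 (dirDeriv v R) := fun v => hR.dirDeriv (by norm_num) v
  have hR₁ : ∀ u v, ContDiff ℝ 1 (dirDeriv u (dirDeriv v R)) := fun u v =>
    (hR₂ v).dirDeriv (by norm_num) u
  have hΔ : ContDiff ℝ 1 (dirLaplacian c R) := ContDiff.sum fun k _ => hR₁ (c k) (c k)
  calc (1 / 2) * dirBracket a b (fun w => R w ^ 2) (fun w => dirLaplacian c R w / R w) w
      = R w * dirBracket a b R (fun w => dirLaplacian c R w / R w) w := by
        rw [dirBracket_sq_left (hR.differentiable (by norm_num) w)]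
        ring
    _ = dirBracket a b R (dirLaplacian c R) w := by
        rw [dirBracket_div_right (hΔ.differentiable one_ne_zero w)
          (hR.differentiable (by norm_num) w) hRw, dirBracket_self]
        field_simp
        simp
    _ = ∑ k, dirBracket a b R (dirDeriv (c k) (dirDeriv (c k) R)) w :=
        dirBracket_sum_right (fun k _ => (hR₁ (c k) (c k)).differentiable one_ne_zero w) R
    _ = ∑ k, dirDeriv (c k) (dirBracket a b R (dirDeriv (c k) R)) w := by
        refine Finset.sum_congr rfl fun k _ => ?_
        rw [dirDeriv_dirBracket (hR.of_le (by norm_num)) (hR₂ (c k)), dirBracket_self]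
        simp

end Laplacian

/-- For positive smooth `R` on the hybrid space,
`(1/2) {R², (ΔₓR)/R} = Σₖ ∂_{xᵏ} {R, ∂_{xᵏ}R}` pointwise. -/
theorem half_bracket_laplacian_identity (n d : ℕ)
    (R : Hyb n d → ℝ) (hR : ContDiff ℝ (⊤ : ℕ∞) R) (hpos : ∀ w, 0 < R w) :
    ∀ w : Hyb n d,
      (1 / 2) * pbH (fun w' => R w' ^ 2) (fun w' => laplxH R w' / R w') w
        = ∑ k, dxH k (fun w' => pbH R (fun w'' => dxH k R w'') w') w := by
  intro w
  exact half_dirBracket_sq_dirLaplacian_div (fun i => ((Pi.single i 1, 0), 0))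
    (fun i => ((0, Pi.single i 1), 0)) (fun k => (0, Pi.single k 1))
    (hR.of_le (WithTop.coe_le_coe.2 le_top)) (hpos w).ne'
end
end
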